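/- Let S > 0, r > 0, and let u : ℝ → ℝ be twice continuously differentiable with 0 < u(x) < 1 for all x, satisfying u''(x) + S·f(u(x)) + (2S/r)(2u(x)−1)(u'(x))² = 0 on ℝ, lim_{x→+∞} u(x) = 0, lim_{x→+∞} u'(x) = 0, and lim_{x→+∞} u'(x)/u(x) = −√S. Then there exist a constant M > 0 such that |u'(x) + √S·u(x)| ≤ M·u(x)² for all x ≥ 0, and a constant C > 0 such that lim_{x→+∞} u(x)·e^{√S·x} = C. -/

import Mathlib

/-!
Put `s = √S` and `v = u' + s u`. Once `u'/u → -s`, the equation reads `u'' = s² u + O(u²)`, i.e.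
`v' - s v = O(u²)`. Then `K/s · u² ± v` are supersolutions of `w' = s w` vanishing at infinity,
hence nonnegative, which gives `|v| ≤ M u²` near infinity; compactness covers the rest of `[0, ∞)`.
Finally `(log u + s x)' = v/u = O(u)` with `u` exponentially decaying, so `log (u e^{s x})` has a
finite limit.
-/

open Real Filter Topology

noncomputable def fpoly (u : ℝ) : ℝ := u * (2 * u - 1) * (1 - u)

open Set

lemma abs_ode_sub_linearization_le {S A U U' c : ℝ} (hS : 0 ≤ S) (hU : 0 < U) (hU1 : U < 1)
    (hU' : |U'| ≤ c * U) :
    |-(S * fpoly U + A * (2 * U - 1) * U' ^ 2) - S * U| ≤ (3 * S + |A| * c ^ 2) * U ^ 2 := by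
  have hsq : U' ^ 2 ≤ (c * U) ^ 2 := by
    rw [← sq_abs]; exact pow_le_pow_left₀ (abs_nonneg _) hU' 2
  have hpoly : |S * U ^ 2 * (3 - 2 * U)| ≤ 3 * S * U ^ 2 := by
    have hSU : 0 ≤ S * U ^ 2 := mul_nonneg hS (sq_nonneg U)
    rw [abs_of_nonneg (mul_nonneg hSU (by linarith))]
    nlinarith
  have hquad : |A * (2 * U - 1) * U' ^ 2| ≤ |A| * c ^ 2 * U ^ 2 := by
    have h2U : |2 * U - 1| ≤ 1 := abs_le.2 ⟨by linarith, by linarith⟩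
    rw [abs_mul, abs_mul, abs_of_nonneg (sq_nonneg U'), mul_assoc, mul_assoc, ← mul_pow]
    exact mul_le_mul_of_nonneg_left
      (by nlinarith [abs_nonneg (2 * U - 1), sq_nonneg U']) (abs_nonneg A)
  calc |-(S * fpoly U + A * (2 * U - 1) * U' ^ 2) - S * U|
      = |-(S * U ^ 2 * (3 - 2 * U)) - A * (2 * U - 1) * U' ^ 2| := by
        unfold fpoly; congr 1; ring
    _ ≤ |S * U ^ 2 * (3 - 2 * U)| + |A * (2 * U - 1) * U' ^ 2| := by
        rw [← abs_neg (S * U ^ 2 * (3 - 2 * U))]; exact abs_sub _ _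
    _ ≤ (3 * S + |A| * c ^ 2) * U ^ 2 := by linarith

lemma nonneg_of_hasDerivAt_le_mul_of_tendsto_zero {w w' : ℝ → ℝ} {s a : ℝ} (hs : 0 < s)
    (hw : ∀ x, HasDerivAt w (w' x) x) (hle : ∀ x, a ≤ x → w' x ≤ s * w x)
    (hlim : Tendsto w atTop (𝓝 0)) {x : ℝ} (hx : a ≤ x) : 0 ≤ w x := by
  set F := fun y => w y * exp (-(s * y))
  have hF : ∀ y, HasDerivAt F ((w' y - s * w y) * exp (-(s * y))) y := fun y => by
    have he : HasDerivAt (fun y => exp (-(s * y))) (exp (-(s * y)) * -s) y := by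
      simpa using (((hasDerivAt_id y).const_mul s).neg).exp
    exact ((hw y).mul he).congr_deriv (by ring)
  have hanti : AntitoneOn F (Ici a) :=
    antitoneOn_of_hasDerivWithinAt_nonpos (convex_Ici a)
      (fun y _ => (hF y).continuousAt.continuousWithinAt) (fun y _ => (hF y).hasDerivWithinAt)
      fun y hy => mul_nonpos_of_nonpos_of_nonneg
        (sub_nonpos.2 (hle y (interior_subset hy))) (exp_pos _).le
  have hF0 : Tendsto F atTop (𝓝 0) := by
    simpa using hlim.mul (tendsto_exp_neg_atTop_nhds_zero.comp (tendsto_id.const_mul_atTop hs))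
  have hFx : 0 ≤ F x := le_of_tendsto hF0 <| (eventually_ge_atTop x).mono fun y hy =>
    hanti hx (hx.trans hy) hy
  exact (mul_nonneg_iff_of_pos_right (exp_pos _)).1 hFx

lemma abs_deriv_add_mul_le_of_abs_sub_le {u u' u'' : ℝ → ℝ} {s K a : ℝ} (hs : 0 < s)
    (hK : 0 ≤ K) (hu : ∀ x, HasDerivAt u (u' x) x) (hu' : ∀ x, HasDerivAt u' (u'' x) x)
    (hmono : ∀ x, a ≤ x → u x * u' x ≤ 0)
    (hres : ∀ x, a ≤ x → |u'' x - s ^ 2 * u x| ≤ K * u x ^ 2)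
    (hlim : Tendsto u atTop (𝓝 0)) (hlim' : Tendsto u' atTop (𝓝 0)) {x : ℝ} (hx : a ≤ x) :
    |u' x + s * u x| ≤ K / s * u x ^ 2 := by
  -- `K/s · u² ± (u' + s u)` is a supersolution of `w' = s w` that vanishes at infinity
  have key : ∀ σ : ℝ, |σ| = 1 → 0 ≤ K / s * u x ^ 2 + σ * (u' x + s * u x) := fun σ hσ => by
    have hw0 : Tendsto (fun y => K / s * u y ^ 2 + σ * (u' y + s * u y)) atTop (𝓝 0) := by
      simpa using ((hlim.pow 2).const_mul (K / s)).add ((hlim'.add (hlim.const_mul s)).const_mul σ)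
    refine nonneg_of_hasDerivAt_le_mul_of_tendsto_zero hs (fun y => (((hu y).pow 2).const_mul
      (K / s)).add (((hu' y).add ((hu y).const_mul s)).const_mul σ)) (fun y hy => ?_) hw0 hx
    have hσres : σ * (u'' y - s ^ 2 * u y) ≤ K * u y ^ 2 :=
      (le_abs_self _).trans (by rw [abs_mul, hσ, one_mul]; exact hres y hy)
    have hKuu' : K / s * (u y * u' y) ≤ 0 :=
      mul_nonpos_of_nonneg_of_nonpos (div_nonneg hK hs.le) (hmono y hy)
    have hsKs : s * (K / s * u y ^ 2) = K * u y ^ 2 := by field_simp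
    simp only [Pi.add_apply, Pi.pow_apply, Nat.add_one_sub_one, pow_one]
    linarith
  rw [abs_le]
  constructor <;> linarith [key 1 (by norm_num), key (-1) (by norm_num)]

lemma exists_pos_forall_Ici_le_mul {g h : ℝ → ℝ} {a b M₀ : ℝ} (hg : ContinuousOn g (Icc a b))
    (hh : ContinuousOn h (Icc a b)) (hpos : ∀ x, a ≤ x → 0 < h x)
    (hle : ∀ x, b ≤ x → g x ≤ M₀ * h x) : ∃ M, 0 < M ∧ ∀ x, a ≤ x → g x ≤ M * h x := by
  obtain ⟨B, hB⟩ := isCompact_Icc.bddAbove_image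
    (hg.div hh fun x hx => (hpos x hx.1).ne')
  refine ⟨max (max M₀ B) 1, by positivity, fun x hx => ?_⟩
  rcases le_total x b with hxb | hbx
  · have hgB : g x ≤ B * h x := (div_le_iff₀ (hpos x hx)).1 (hB ⟨x, ⟨hx, hxb⟩, rfl⟩)
    exact hgB.trans (mul_le_mul_of_nonneg_right (by simp) (hpos x hx).le)
  · exact (hle x hbx).trans (mul_le_mul_of_nonneg_right (by simp) (hpos x (by linarith)).le)

lemma eventually_abs_le_and_le_of_tendsto_div {u u' : ℝ → ℝ} {s : ℝ} (hs : 0 < s)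
    (hpos : ∀ x, 0 < u x) (h : Tendsto (fun x => u' x / u x) atTop (𝓝 (-s))) :
    ∀ᶠ x in atTop, |u' x| ≤ 2 * s * u x ∧ u' x ≤ -(s / 2) * u x := by
  filter_upwards [h.eventually_const_lt (by linarith : -(2 * s) < -s),
    h.eventually_lt_const (by linarith : -s < -(s / 2))] with x hlo hhi
  rw [lt_div_iff₀ (hpos x)] at hlo
  rw [div_lt_iff₀ (hpos x)] at hhi
  exact ⟨abs_le.2 ⟨by linarith, by nlinarith [hpos x]⟩, hhi.le⟩

lemma AntitoneOn.exists_tendsto_atTop {f : ℝ → ℝ} {a m : ℝ} (hf : AntitoneOn f (Ici a))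
    (hm : ∀ x, a ≤ x → m ≤ f x) : ∃ L, Tendsto f atTop (𝓝 L) := by
  have hanti : Antitone fun x => f (max x a) := fun x y hxy =>
    hf (le_max_right x a) (le_max_right y a) (max_le_max hxy le_rfl)
  refine ⟨_, (tendsto_atTop_ciInf hanti ⟨m, ?_⟩).congr' ?_⟩
  · rintro _ ⟨x, rfl⟩
    exact hm _ (le_max_right x a)
  · filter_upwards [eventually_ge_atTop a] with x hx
    rw [max_eq_left hx]

lemma exists_tendsto_mul_exp_of_abs_deriv_add_mul_le {u u' : ℝ → ℝ} {s α M a : ℝ} (hα : 0 < α)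
    (hu : ∀ x, HasDerivAt u (u' x) x) (hpos : ∀ x, 0 < u x)
    (hdecay : ∀ x, a ≤ x → u' x ≤ -α * u x) (hM : ∀ x, a ≤ x → |u' x + s * u x| ≤ M * u x ^ 2)
    (hlim : Tendsto u atTop (𝓝 0)) :
    ∃ C, 0 < C ∧ Tendsto (fun x => u x * exp (s * x)) atTop (𝓝 C) := by
  have hMα : 0 ≤ M / α := div_nonneg (nonneg_of_mul_nonneg_left
    ((abs_nonneg _).trans (hM a le_rfl)) (pow_pos (hpos a) 2)) hα.le
  set h := fun x => log (u x) + s * x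
  have hh : ∀ x, HasDerivAt h ((u' x + s * u x) / u x) x := fun x => by
    have hsx : HasDerivAt (fun y => s * y) s x := by simpa using (hasDerivAt_id x).const_mul s
    exact (((hu x).log (hpos x).ne').fun_add hsx).congr_deriv
      (by rw [add_div, mul_div_cancel_right₀ _ (hpos x).ne'])
  -- `|h'| ≤ M u ≤ -(M/α) u'`, so `h ± (M/α) u` are monotone in opposite directions
  have hh' : ∀ x, a ≤ x → |(u' x + s * u x) / u x| ≤ -(M / α * u' x) := fun x hx => by
    rw [abs_div, abs_of_pos (hpos x), div_le_iff₀ (hpos x)]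
    calc |u' x + s * u x| ≤ M / α * (α * u x) * u x := by
          rw [show M / α * (α * u x) * u x = M * u x ^ 2 by field_simp]; exact hM x hx
      _ ≤ M / α * (-u' x) * u x := by
          gcongr
          · exact (hpos x).le
          · linarith [hdecay x hx]
      _ = -(M / α * u' x) * u x := by ring
  have hp : AntitoneOn (fun x => h x + M / α * u x) (Ici a) :=
    antitoneOn_of_hasDerivWithinAt_nonpos (convex_Ici a)
      (fun x _ => ((hh x).add ((hu x).const_mul _)).continuousAt.continuousWithinAt)
      (fun x _ => ((hh x).add ((hu x).const_mul _)).hasDerivWithinAt)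
      fun x hx => by linarith [le_abs_self ((u' x + s * u x) / u x), hh' x (interior_subset hx)]
  have hq : MonotoneOn (fun x => h x - M / α * u x) (Ici a) :=
    monotoneOn_of_hasDerivWithinAt_nonneg (convex_Ici a)
      (fun x _ => ((hh x).sub ((hu x).const_mul _)).continuousAt.continuousWithinAt)
      (fun x _ => ((hh x).sub ((hu x).const_mul _)).hasDerivWithinAt)
      fun x hx => by linarith [neg_abs_le ((u' x + s * u x) / u x), hh' x (interior_subset hx)]
  obtain ⟨L, hL⟩ := hp.exists_tendsto_atTop (m := h a - M / α * u a) fun x hx => by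
    have := hq self_mem_Ici hx hx
    nlinarith [mul_nonneg hMα (hpos x).le]
  have hhL : Tendsto h atTop (𝓝 L) := by
    simpa using hL.sub (hlim.const_mul (M / α))
  refine ⟨exp L, exp_pos L, ((continuous_exp.tendsto L).comp hhL).congr fun x => ?_⟩
  simp only [h, Function.comp_apply, exp_add, exp_log (hpos x)]

theorem decay_rate_at_infinity (S r : ℝ) (hS : 0 < S)
    (u : ℝ → ℝ) (hu : ContDiff ℝ 2 u) (hb : ∀ x : ℝ, 0 < u x ∧ u x < 1)
    (hode : ∀ x : ℝ, deriv (deriv u) x + S * fpoly (u x)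
      + (2 * S / r) * (2 * u x - 1) * (deriv u x) ^ 2 = 0)
    (hlim0 : Tendsto u atTop (𝓝 0))
    (hlim0' : Tendsto (deriv u) atTop (𝓝 0))
    (hratio : Tendsto (fun x : ℝ => deriv u x / u x) atTop (𝓝 (-(Real.sqrt S)))) :
    (∃ M : ℝ, 0 < M ∧ ∀ x : ℝ, 0 ≤ x →
      |deriv u x + Real.sqrt S * u x| ≤ M * (u x) ^ 2) ∧
    (∃ C : ℝ, 0 < C ∧
      Tendsto (fun x : ℝ => u x * Real.exp (Real.sqrt S * x)) atTop (𝓝 C)) := by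
  set s := √S
  have hs : 0 < s := sqrt_pos.2 hS
  have hu' : ∀ x, HasDerivAt u (deriv u x) x :=
    fun x => (hu.differentiable two_ne_zero x).hasDerivAt
  have hu'' : ∀ x, HasDerivAt (deriv u) (deriv (deriv u) x) x :=
    fun x => ((hu.iterate_deriv' 1 1).differentiable one_ne_zero x).hasDerivAt
  obtain ⟨a, ha⟩ := eventually_atTop.1
    (eventually_abs_le_and_le_of_tendsto_div hs (fun x => (hb x).1) hratio)
  set K := 3 * S + |2 * S / r| * (2 * s) ^ 2
  have hres : ∀ x, a ≤ x → |deriv (deriv u) x - s ^ 2 * u x| ≤ K * u x ^ 2 := fun x hx => by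
    have hu''x : deriv (deriv u) x
        = -(S * fpoly (u x) + 2 * S / r * (2 * u x - 1) * deriv u x ^ 2) := by
      linarith [hode x]
    rw [sq_sqrt hS.le, hu''x]
    exact abs_ode_sub_linearization_le hS.le (hb x).1 (hb x).2 (ha x hx).1
  have hv : ∀ x, a ≤ x → |deriv u x + s * u x| ≤ K / s * u x ^ 2 := fun x hx =>
    abs_deriv_add_mul_le_of_abs_sub_le hs (by positivity) hu' hu''
      (fun y hy => mul_nonpos_of_nonneg_of_nonpos (hb y).1.le
        ((ha y hy).2.trans (by nlinarith [(hb y).1]))) hres hlim0 hlim0' hx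
  have hcont : Continuous fun x => |deriv u x + s * u x| :=
    (hu.continuous_deriv one_le_two |>.add (continuous_const.mul hu.continuous)).abs
  refine ⟨exists_pos_forall_Ici_le_mul hcont.continuousOn (hu.continuous.pow 2).continuousOn
      (fun x _ => pow_pos (hb x).1 2) hv,
    exists_tendsto_mul_exp_of_abs_deriv_add_mul_le (half_pos hs) hu' (fun x => (hb x).1)
      (fun x hx => (ha x hx).2) hv hlim0⟩
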